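/- For the Church numeral type Ent = ∀X((X→X)→(X→X)): a λ-term t belongs to |Ent| if and only if t β-reduces to a term t' with ⊢_F t' : Ent. In particular |Ent| = {t ∈ Λ : ∃t', t →_β t' and ⊢_F t' : Ent}. -/

import Mathlib

/-! Untyped λ-calculus (de Bruijn) and System F realizability semantics. -/

/-- Untyped λ-terms in de Bruijn notation. -/
inductive Lam : Type
  | var : ℕ → Lam
  | app : Lam → Lam → Lam
  | lam : Lam → Lam
deriving DecidableEq

namespace Lam

/-- Shift the free variables ≥ `d` up by one. -/
def lift (d : ℕ) : Lam → Lam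
  | var n => if n < d then var n else var (n + 1)
  | app t u => app (lift d t) (lift d u)
  | lam t => lam (lift (d + 1) t)

/-- Capture-avoiding substitution of `u` for the variable `k` (de Bruijn). -/
def subst : Lam → ℕ → Lam → Lam
  | var n, k, u => if n = k then u else if k < n then var (n - 1) else var n
  | app t s, k, u => app (subst t k u) (subst s k u)
  | lam t, k, u => lam (subst t (k + 1) (lift 0 u))

/-- Free variables of a term. -/
def fv : Lam → Finset ℕ
  | var n => {n}
  | app t u => fv t ∪ fv u
  | lam t => ((fv t).erase 0).image (· - 1)

/-- One-step β-reduction. -/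
inductive Beta : Lam → Lam → Prop
  | beta (t u : Lam) : Beta (app (lam t) u) (subst t 0 u)
  | appL {t t' : Lam} (u : Lam) : Beta t t' → Beta (app t u) (app t' u)
  | appR (t : Lam) {u u' : Lam} : Beta u u' → Beta (app t u) (app t u')
  | lam {t t' : Lam} : Beta t t' → Beta (lam t) (lam t')

/-- Many-step β-reduction. -/
def BetaStar : Lam → Lam → Prop := Relation.ReflTransGen Beta

/-- β-equivalence. -/
def BetaEq : Lam → Lam → Prop := Relation.EqvGen Beta

/-- One-step η-reduction. -/
inductive Eta : Lam → Lam → Prop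
  | eta (t : Lam) : Eta (lam (app (lift 0 t) (var 0))) t
  | appL {t t' : Lam} (u : Lam) : Eta t t' → Eta (app t u) (app t' u)
  | appR (t : Lam) {u u' : Lam} : Eta u u' → Eta (app t u) (app t u')
  | lam {t t' : Lam} : Eta t t' → Eta (lam t) (lam t')

/-- βη-equivalence. -/
def BetaEtaEq : Lam → Lam → Prop := Relation.EqvGen (fun t u => Beta t u ∨ Eta t u)

/-- One-step weak head reduction: contracts the weak head redex `(λ t) u`
possibly applied to further arguments. -/
inductive Whr : Lam → Lam → Prop
  | head (t u : Lam) : Whr (app (lam t) u) (subst t 0 u)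
  | appL {t t' : Lam} (u : Lam) : Whr t t' → Whr (app t u) (app t' u)

/-- Many-step weak head reduction (`≻_f`). -/
def WhrStar : Lam → Lam → Prop := Relation.ReflTransGen Whr

/-- A term is normal when it has no β-redex. -/
def Normal (t : Lam) : Prop := ∀ u, ¬ Beta t u

def Normalizable (t : Lam) : Prop := ∃ u, BetaStar t u ∧ Normal u

/-- `(t)v₁…vₘ`. -/
def appList (t : Lam) (l : List Lam) : Lam := l.foldl app t

end Lam

/-- A set of λ-terms is saturated when it is closed under weak-head-expansion. -/
def Saturated (G : Set Lam) : Prop := ∀ t u : Lam, Lam.WhrStar t u → u ∈ G → t ∈ G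

/-- A set of λ-terms is β-saturated when it is closed under β-expansion. -/
def BetaSaturated (G : Set Lam) : Prop := ∀ t u : Lam, Lam.BetaStar t u → u ∈ G → t ∈ G

/-- `G → G' = {u : ∀ t ∈ G, (u)t ∈ G'}`. -/
def arrowSet (G G' : Set Lam) : Set Lam := {u | ∀ t ∈ G, Lam.app u t ∈ G'}

/-- Types of System F (de Bruijn type variables). -/
inductive Ty : Type
  | var : ℕ → Ty
  | arr : Ty → Ty → Ty
  | all : Ty → Ty
deriving DecidableEq

namespace Ty

/-- Shift the free type variables ≥ `d` up by one. -/
def lift (d : ℕ) : Ty → Ty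
  | var n => if n < d then var n else var (n + 1)
  | arr A B => arr (lift d A) (lift d B)
  | all A => all (lift (d + 1) A)

/-- Capture-avoiding substitution of the type `C` for the type variable `k`. -/
def subst : Ty → ℕ → Ty → Ty
  | var n, k, C => if n = k then C else if k < n then var (n - 1) else var n
  | arr A B, k, C => arr (subst A k C) (subst B k C)
  | all A, k, C => all (subst A (k + 1) (lift 0 C))

/-- Free type variables. -/
def fv : Ty → Finset ℕ
  | var n => {n}
  | arr A B => fv A ∪ fv B
  | all A => ((fv A).erase 0).image (· - 1)

end Ty

mutual
  /-- ∀⁺ types: types with positive quantifiers. -/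
  inductive PosTy : Ty → Prop
    | var (n : ℕ) : PosTy (Ty.var n)
    | arr {B A : Ty} : NegTy B → PosTy A → PosTy (Ty.arr B A)
    | all {A : Ty} : PosTy A → 0 ∈ A.fv → PosTy (Ty.all A)
  /-- ∀⁻ types: types with negative quantifiers. -/
  inductive NegTy : Ty → Prop
    | var (n : ℕ) : NegTy (Ty.var n)
    | arr {B A : Ty} : PosTy B → NegTy A → NegTy (Ty.arr B A)
end

/-- Typing contexts: a partial assignment of types to (de Bruijn) term variables. -/
def Ctx : Type := ℕ → Option Ty

def Ctx.empty : Ctx := fun _ => none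

def Ctx.cons (B : Ty) (Γ : Ctx) : Ctx := fun n =>
  match n with
  | 0 => some B
  | n + 1 => Γ n

/-- Shift all type variables of a context (used for ∀-introduction: the fresh
type variable `0` does not occur in the shifted context). -/
def Ctx.liftTy (Γ : Ctx) : Ctx := fun n => (Γ n).map (Ty.lift 0)

/-- Curry-style typing of System F. -/
inductive TyJ : Ctx → Lam → Ty → Prop
  | var {Γ : Ctx} {x : ℕ} {A : Ty} : Γ x = some A → TyJ Γ (Lam.var x) A
  | lam {Γ : Ctx} {B C : Ty} {t : Lam} :
      TyJ (Ctx.cons B Γ) t C → TyJ Γ (Lam.lam t) (Ty.arr B C)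
  | app {Γ : Ctx} {B C : Ty} {u v : Lam} :
      TyJ Γ u (Ty.arr B C) → TyJ Γ v B → TyJ Γ (Lam.app u v) C
  | allI {Γ : Ctx} {A : Ty} {t : Lam} :
      TyJ (Ctx.liftTy Γ) t A → TyJ Γ t (Ty.all A)
  | allE {Γ : Ctx} {A : Ty} {t : Lam} (C : Ty) :
      TyJ Γ t (Ty.all A) → TyJ Γ t (Ty.subst A 0 C)

/-- System F0 : System F where ∀-elimination only instantiates by type variables. -/
inductive TyJ0 : Ctx → Lam → Ty → Prop
  | var {Γ : Ctx} {x : ℕ} {A : Ty} : Γ x = some A → TyJ0 Γ (Lam.var x) A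
  | lam {Γ : Ctx} {B C : Ty} {t : Lam} :
      TyJ0 (Ctx.cons B Γ) t C → TyJ0 Γ (Lam.lam t) (Ty.arr B C)
  | app {Γ : Ctx} {B C : Ty} {u v : Lam} :
      TyJ0 Γ u (Ty.arr B C) → TyJ0 Γ v B → TyJ0 Γ (Lam.app u v) C
  | allI {Γ : Ctx} {A : Ty} {t : Lam} :
      TyJ0 (Ctx.liftTy Γ) t A → TyJ0 Γ t (Ty.all A)
  | allE {Γ : Ctx} {A : Ty} {t : Lam} (Y : ℕ) :
      TyJ0 Γ t (Ty.all A) → TyJ0 Γ t (Ty.subst A 0 (Ty.var Y))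

/-- Interpretations: assignments of sets of λ-terms to type variables. -/
def Interp : Type := ℕ → Set Lam

def Interp.cons (G : Set Lam) (I : Interp) : Interp := fun n =>
  match n with
  | 0 => G
  | n + 1 => I n

/-- Interpretation of types, parameterized by the admissibility class `C` of
sets used to interpret type variables (e.g. `Saturated`). -/
def interpC (C : Set Lam → Prop) : Ty → Interp → Set Lam
  | Ty.var n, I => I n
  | Ty.arr A B, I => arrowSet (interpC C A I) (interpC C B I)
  | Ty.all A, I => ⋂ (G : Set Lam) (_ : C G), interpC C A (Interp.cons G I)

/-- Girard–Krivine interpretation `|A|_I` with saturated sets. -/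
def interp : Ty → Interp → Set Lam := interpC Saturated

/-- `|A|`, the intersection of `|A|_I` over all admissible interpretations. -/
def SemC (C : Set Lam → Prop) (A : Ty) : Set Lam :=
  {t | ∀ I : Interp, (∀ n, C (I n)) → t ∈ interpC C A I}

/-- `|A| = ⋂_I |A|_I` over interpretations into saturated sets. -/
def Sem (A : Ty) : Set Lam := SemC Saturated A

/-- `Ent = ∀X((X→X)→(X→X))`, the type of Church numerals. -/
def Ent : Ty :=
  Ty.all (Ty.arr (Ty.arr (Ty.var 0) (Ty.var 0)) (Ty.arr (Ty.var 0) (Ty.var 0)))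

/-!
Take for `X` the saturated set of terms that β-reduce to some `fⁿ x`, where `f` and `x` are
variables not free in `t`: every `t ∈ |Ent|` then satisfies `t f x →β fⁿ x`. By
standardization this reduction starts with weak head reduction, and since renaming variables
neither creates nor removes redexes, the weak head reduction of `t f x` can be pulled back to
`t`. Hence `t →β λf x. fⁿ x`, or `t →β λf. f` (when `n = 1`), and both normal forms have type
`Ent`. Conversely, if `t →β t'` with `⊢ t' : Ent`, then `t' ∈ |Ent|` by adequacy, so again
`t f x →β fⁿ x` and `t` reduces to one of these normal forms; by standardization it reaches
them through weak head reductions only, and saturation then puts `t` in `|Ent|`.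
-/

namespace Lam

def scons {α : Type*} (a : α) (f : ℕ → α) : ℕ → α
  | 0 => a
  | n + 1 => f n

@[simp] theorem scons_zero {α : Type*} (a : α) (f : ℕ → α) : scons a f 0 = a := rfl

@[simp] theorem scons_succ {α : Type*} (a : α) (f : ℕ → α) (n : ℕ) :
    scons a f (n + 1) = f n := rfl

def upRen (r : ℕ → ℕ) : ℕ → ℕ := scons 0 (Nat.succ ∘ r)

def rename (r : ℕ → ℕ) : Lam → Lam
  | var n => var (r n)
  | app t u => app (rename r t) (rename r u)
  | lam t => lam (rename (upRen r) t)

def upSubst (σ : ℕ → Lam) : ℕ → Lam := scons (var 0) (rename Nat.succ ∘ σ)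

def msubst (σ : ℕ → Lam) : Lam → Lam
  | var n => σ n
  | app t u => app (msubst σ t) (msubst σ u)
  | lam t => lam (msubst (upSubst σ) t)

theorem upRen_comp (r s : ℕ → ℕ) : upRen (r ∘ s) = upRen r ∘ upRen s := by
  funext n; cases n <;> rfl

theorem rename_rename (r s : ℕ → ℕ) (t : Lam) : rename r (rename s t) = rename (r ∘ s) t := by
  induction t generalizing r s with
  | var n => rfl
  | app a b iha ihb => simp [rename, iha, ihb]
  | lam a ih => simp [rename, ih, upRen_comp]

theorem msubst_rename (σ : ℕ → Lam) (r : ℕ → ℕ) (t : Lam) :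
    msubst σ (rename r t) = msubst (σ ∘ r) t := by
  induction t generalizing σ r with
  | var n => rfl
  | app a b iha ihb => simp [rename, msubst, iha, ihb]
  | lam a ih =>
    have : upSubst σ ∘ upRen r = upSubst (σ ∘ r) := by funext n; cases n <;> rfl
    simp [rename, msubst, ih, this]

theorem rename_msubst (r : ℕ → ℕ) (σ : ℕ → Lam) (t : Lam) :
    rename r (msubst σ t) = msubst (rename r ∘ σ) t := by
  induction t generalizing σ r with
  | var n => rfl
  | app a b iha ihb => simp [rename, msubst, iha, ihb]
  | lam a ih =>
    have : rename (upRen r) ∘ upSubst σ = upSubst (rename r ∘ σ) := by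
      funext n; cases n with
      | zero => rfl
      | succ n =>
        show rename (upRen r) (rename Nat.succ (σ n)) = rename Nat.succ (rename r (σ n))
        rw [rename_rename, rename_rename]
        rfl
    simp [rename, msubst, ih, this]

theorem msubst_msubst (σ τ : ℕ → Lam) (t : Lam) :
    msubst σ (msubst τ t) = msubst (msubst σ ∘ τ) t := by
  induction t generalizing σ τ with
  | var n => rfl
  | app a b iha ihb => simp [msubst, iha, ihb]
  | lam a ih =>
    have : msubst (upSubst σ) ∘ upSubst τ = upSubst (msubst σ ∘ τ) := by
      funext n; cases n with
      | zero => rfl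
      | succ n =>
        show msubst (upSubst σ) (rename Nat.succ (τ n)) = rename Nat.succ (msubst σ (τ n))
        rw [msubst_rename, rename_msubst]
        rfl
    simp [msubst, ih, this]

theorem msubst_var (t : Lam) : msubst var t = t := by
  induction t with
  | var n => rfl
  | app a b iha ihb => simp [msubst, iha, ihb]
  | lam a ih =>
    have : upSubst var = var := by funext n; cases n <;> rfl
    simp [msubst, this, ih]

theorem rename_eq_msubst (r : ℕ → ℕ) (t : Lam) : rename r t = msubst (var ∘ r) t := by
  simpa [msubst_rename] using (msubst_var (rename r t)).symm

theorem lift_eq_rename (d : ℕ) (t : Lam) :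
    lift d t = rename (fun n => if n < d then n else n + 1) t := by
  induction t generalizing d with
  | var n => simp only [lift, rename, apply_ite var]
  | app a b iha ihb => simp [lift, rename, iha, ihb]
  | lam a ih =>
    have : upRen (fun n => if n < d then n else n + 1) =
        fun n => if n < d + 1 then n else n + 1 := by
      funext n
      cases n with
      | zero => simp [upRen]
      | succ n =>
        simp only [upRen, scons_succ, Function.comp_apply, Nat.add_lt_add_iff_right]
        split_ifs <;> rfl
    simp [lift, rename, ih, this]

theorem lift_zero_eq_rename (t : Lam) : lift 0 t = rename Nat.succ t := by
  simp [lift_eq_rename]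

theorem subst_eq_msubst (t : Lam) (k : ℕ) (u : Lam) :
    subst t k u = msubst (fun n => if n = k then u else if k < n then var (n - 1) else var n) t := by
  induction t generalizing k u with
  | var n => rfl
  | app a b iha ihb => simp [subst, msubst, iha, ihb]
  | lam a ih =>
    simp only [subst, msubst, ih]
    congr 2
    funext n
    cases n with
    | zero => simp [upSubst]
    | succ n =>
      simp only [upSubst, scons_succ, Function.comp_apply, lift_zero_eq_rename,
        Nat.add_right_cancel_iff, Nat.add_lt_add_iff_right]
      split_ifs
      · rfl
      · simp only [rename, Nat.succ_eq_add_one, var.injEq]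
        omega
      · rfl

theorem subst_zero_eq_msubst (t u : Lam) : subst t 0 u = msubst (scons u var) t := by
  rw [subst_eq_msubst]
  congr 1
  funext n
  cases n <;> simp

theorem subst_var_eq_rename (t : Lam) (j : ℕ) : subst t 0 (var j) = rename (scons j id) t := by
  rw [subst_zero_eq_msubst, rename_eq_msubst]
  congr 1
  funext n
  cases n <;> rfl

theorem msubst_upSubst_scons (σ : ℕ → Lam) (t u : Lam) :
    subst (msubst (upSubst σ) t) 0 u = msubst (scons u σ) t := by
  rw [subst_zero_eq_msubst, msubst_msubst]
  congr 1
  funext n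
  cases n with
  | zero => rfl
  | succ n =>
    show msubst (scons u var) (rename Nat.succ (σ n)) = σ n
    rw [msubst_rename]
    exact msubst_var (σ n)

theorem msubst_subst (σ : ℕ → Lam) (t u : Lam) :
    msubst σ (subst t 0 u) = subst (msubst (upSubst σ) t) 0 (msubst σ u) := by
  rw [msubst_upSubst_scons, subst_zero_eq_msubst, msubst_msubst]
  congr 1
  funext n
  cases n <;> rfl

theorem rename_subst (r : ℕ → ℕ) (t u : Lam) :
    rename r (subst t 0 u) = subst (rename (upRen r) t) 0 (rename r u) := by
  have : upSubst (var ∘ r) = var ∘ upRen r := by funext n; cases n <;> rfl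
  simp only [rename_eq_msubst, msubst_subst, this]

theorem scons_comp_upRen (j : ℕ) (r : ℕ → ℕ) : scons j id ∘ upRen r = scons j r := by
  funext n; cases n <;> rfl

theorem BetaStar.appL {t t' : Lam} (h : BetaStar t t') (u : Lam) :
    BetaStar (app t u) (app t' u) :=
  Relation.ReflTransGen.lift (app · u) (fun _ _ => Beta.appL u) _ _ h

theorem BetaStar.appR (t : Lam) {u u' : Lam} (h : BetaStar u u') :
    BetaStar (app t u) (app t u') :=
  Relation.ReflTransGen.lift (app t) (fun _ _ => Beta.appR t) _ _ h

theorem BetaStar.lam {t t' : Lam} (h : BetaStar t t') : BetaStar (lam t) (lam t') :=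
  Relation.ReflTransGen.lift Lam.lam (fun _ _ => Beta.lam) _ _ h

theorem WhrStar.appL {t t' : Lam} (h : WhrStar t t') (u : Lam) :
    WhrStar (app t u) (app t' u) :=
  Relation.ReflTransGen.lift (app · u) (fun _ _ => Whr.appL u) _ _ h

theorem Whr.beta {t u : Lam} (h : Whr t u) : Beta t u := by
  induction h with
  | head t u => exact Beta.beta t u
  | appL u _ ih => exact Beta.appL u ih

theorem WhrStar.betaStar {t u : Lam} (h : WhrStar t u) : BetaStar t u :=
  Relation.ReflTransGen.mono (fun _ _ => Whr.beta) _ _ h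

theorem Whr.msubst {a b : Lam} (h : Whr a b) (σ : ℕ → Lam) : Whr (msubst σ a) (msubst σ b) := by
  induction h with
  | head t u => rw [msubst_subst]; exact Whr.head _ _
  | appL u _ ih => exact Whr.appL _ ih

theorem WhrStar.msubst {a b : Lam} (h : WhrStar a b) (σ : ℕ → Lam) :
    WhrStar (msubst σ a) (msubst σ b) :=
  Relation.ReflTransGen.lift (Lam.msubst σ) (fun _ _ h => h.msubst σ) _ _ h

theorem WhrStar.rename {a b : Lam} (h : WhrStar a b) (r : ℕ → ℕ) :
    WhrStar (rename r a) (rename r b) := by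
  simpa only [rename_eq_msubst] using h.msubst (var ∘ r)

theorem WhrStar.app_lam {t s : Lam} (h : WhrStar t (lam s)) (u : Lam) :
    WhrStar (app t u) (Lam.msubst (scons u var) s) := by
  rw [← subst_zero_eq_msubst]
  exact (h.appL u).tail (Whr.head s u)

theorem WhrStar.app_cases {s u w : Lam} (h : WhrStar (app s u) w) :
    (∃ p, w = app p u ∧ WhrStar s p) ∨
      ∃ b, WhrStar s (lam b) ∧ WhrStar (subst b 0 u) w := by
  generalize hv : app s u = v at h
  induction h using Relation.ReflTransGen.head_induction_on generalizing s with
  | refl => exact Or.inl ⟨s, hv.symm, .refl⟩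
  | head hs hrest ih =>
    subst hv
    cases hs with
    | head b u => exact Or.inr ⟨b, .refl, hrest⟩
    | appL u hss =>
      rcases ih rfl with ⟨p, hw, hsp⟩ | ⟨b, hlam, hsub⟩
      · exact Or.inl ⟨p, hw, .head hss hsp⟩
      · exact Or.inr ⟨b, .head hss hlam, hsub⟩

theorem rename_eq_var {r : ℕ → ℕ} {a : Lam} {n : ℕ} (h : rename r a = var n) :
    ∃ k, a = var k ∧ n = r k := by
  cases a <;> simp only [rename, reduceCtorEq, var.injEq] at h
  exact ⟨_, rfl, h.symm⟩

theorem rename_eq_app {r : ℕ → ℕ} {a p q : Lam} (h : rename r a = app p q) :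
    ∃ a₁ a₂, a = app a₁ a₂ ∧ p = rename r a₁ ∧ q = rename r a₂ := by
  cases a <;> simp only [rename, reduceCtorEq, app.injEq] at h
  exact ⟨_, _, rfl, h.1.symm, h.2.symm⟩

theorem rename_eq_lam {r : ℕ → ℕ} {a p : Lam} (h : rename r a = lam p) :
    ∃ a₀, a = lam a₀ ∧ p = rename (upRen r) a₀ := by
  cases a <;> simp only [rename, reduceCtorEq, lam.injEq] at h
  exact ⟨_, rfl, h.symm⟩

theorem Whr.exists_of_rename {r : ℕ → ℕ} {a w : Lam} (h : Whr (rename r a) w) :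
    ∃ a', Whr a a' ∧ w = rename r a' := by
  generalize hs : rename r a = s at h
  induction h generalizing a with
  | head t u =>
    obtain ⟨a₁, a₂, rfl, h₁, rfl⟩ := rename_eq_app hs
    obtain ⟨a₀, rfl, rfl⟩ := rename_eq_lam h₁.symm
    exact ⟨_, Whr.head a₀ a₂, (rename_subst r a₀ a₂).symm⟩
  | appL u _ ih =>
    obtain ⟨a₁, a₂, rfl, h₁, rfl⟩ := rename_eq_app hs
    obtain ⟨a₁', h', rfl⟩ := ih h₁.symm
    exact ⟨app a₁' a₂, Whr.appL a₂ h', rfl⟩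

theorem WhrStar.exists_of_rename {r : ℕ → ℕ} {a w : Lam} (h : WhrStar (Lam.rename r a) w) :
    ∃ a', WhrStar a a' ∧ w = Lam.rename r a' := by
  induction h with
  | refl => exact ⟨a, .refl, rfl⟩
  | tail _ hw ih =>
    obtain ⟨a', ha', rfl⟩ := ih
    obtain ⟨a'', ha'', rfl⟩ := hw.exists_of_rename
    exact ⟨a'', ha'.tail ha'', rfl⟩

inductive ClosedAt : ℕ → Lam → Prop
  | var {m n : ℕ} : n < m → ClosedAt m (var n)
  | app {m : ℕ} {t u : Lam} : ClosedAt m t → ClosedAt m u → ClosedAt m (app t u)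
  | lam {m : ℕ} {t : Lam} : ClosedAt (m + 1) t → ClosedAt m (lam t)

theorem ClosedAt.mono {m m' : ℕ} {t : Lam} (h : ClosedAt m t) (hm : m ≤ m') : ClosedAt m' t := by
  induction h generalizing m' with
  | var h => exact .var (by omega)
  | app _ _ ih₁ ih₂ => exact .app (ih₁ hm) (ih₂ hm)
  | lam _ ih => exact .lam (ih (by omega))

theorem exists_closedAt (t : Lam) : ∃ m, ClosedAt m t := by
  induction t with
  | var n => exact ⟨n + 1, .var (by omega)⟩
  | app a b iha ihb =>
    obtain ⟨m, ha⟩ := iha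
    obtain ⟨m', hb⟩ := ihb
    exact ⟨max m m', .app (ha.mono (le_max_left ..)) (hb.mono (le_max_right ..))⟩
  | lam a ih =>
    obtain ⟨m, ha⟩ := ih
    exact ⟨m, .lam (ha.mono (by omega))⟩

theorem ClosedAt.rename {k m : ℕ} {t : Lam} (h : ClosedAt k t) {r : ℕ → ℕ}
    (hr : ∀ n < k, r n < m) : ClosedAt m (rename r t) := by
  induction h generalizing m r with
  | var h => exact .var (hr _ h)
  | app _ _ ih₁ ih₂ => exact .app (ih₁ hr) (ih₂ hr)
  | lam _ ih =>
    refine .lam (ih fun n hn => ?_)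
    cases n with
    | zero => exact Nat.succ_pos m
    | succ n => exact Nat.succ_lt_succ (hr n (by omega))

theorem ClosedAt.msubst {k m : ℕ} {t : Lam} (h : ClosedAt k t) {σ : ℕ → Lam}
    (hσ : ∀ n < k, ClosedAt m (σ n)) : ClosedAt m (msubst σ t) := by
  induction h generalizing m σ with
  | var h => exact hσ _ h
  | app _ _ ih₁ ih₂ => exact .app (ih₁ hσ) (ih₂ hσ)
  | lam _ ih =>
    refine .lam (ih fun n hn => ?_)
    cases n with
    | zero => exact .var (Nat.succ_pos m)
    | succ n => exact (hσ n (by omega)).rename fun _ h => Nat.succ_lt_succ h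

theorem ClosedAt.beta {m : ℕ} {t u : Lam} (ht : ClosedAt m t) (h : Beta t u) : ClosedAt m u := by
  induction h generalizing m with
  | beta t u =>
    cases ht with | app ht hu => cases ht with | lam ht =>
    rw [subst_zero_eq_msubst]
    refine ht.msubst fun n hn => ?_
    cases n with
    | zero => exact hu
    | succ n => exact .var (by omega)
  | appL u _ ih => cases ht with | app ht hu => exact .app (ih ht) hu
  | appR t _ ih => cases ht with | app ht hu => exact .app ht (ih hu)
  | lam _ ih => cases ht with | lam ht => exact .lam (ih ht)

theorem ClosedAt.betaStar {m : ℕ} {t u : Lam} (ht : ClosedAt m t) (h : BetaStar t u) :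
    ClosedAt m u := by
  induction h with
  | refl => exact ht
  | tail _ hb ih => exact ih.beta hb

theorem injOn_scons {k j : ℕ} {r : ℕ → ℕ} (hr : Set.InjOn r (Set.Iio k)) (hj : ∀ i < k, r i ≠ j) :
    Set.InjOn (scons j r) (Set.Iio (k + 1)) := by
  rintro (_ | a) ha (_ | b) hb h
  · rfl
  · exact absurd h.symm (hj b (Nat.lt_of_succ_lt_succ hb))
  · exact absurd h (hj a (Nat.lt_of_succ_lt_succ ha))
  · exact congrArg (· + 1) (hr (Nat.lt_of_succ_lt_succ ha) (Nat.lt_of_succ_lt_succ hb) h)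

theorem ClosedAt.rename_injective {k : ℕ} {r : ℕ → ℕ} (hr : Set.InjOn r (Set.Iio k)) {a b : Lam}
    (ha : ClosedAt k a) (hb : ClosedAt k b) (h : Lam.rename r a = Lam.rename r b) : a = b := by
  induction ha generalizing b r with
  | var hn =>
    obtain ⟨n', rfl, hrn⟩ := rename_eq_var h.symm
    cases hb with | var hn' => rw [hr hn hn' hrn]
  | app _ _ ih₁ ih₂ =>
    obtain ⟨b₁, b₂, rfl, h₁, h₂⟩ := rename_eq_app h.symm
    cases hb with | app hb₁ hb₂ =>
    rw [ih₁ hr hb₁ h₁, ih₂ hr hb₂ h₂]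
  | lam _ ih =>
    obtain ⟨b₀, rfl, h₀⟩ := rename_eq_lam h.symm
    cases hb with | lam hb₀ =>
    have hr' := injOn_scons (j := 0) (fun _ hi _ hj h => hr hi hj (Nat.succ_injective h))
      fun _ _ => Nat.succ_ne_zero _
    exact congrArg Lam.lam (ih hr' hb₀ h₀)

/-- Head-standard reduction: by standardization it is all of `BetaStar` (`StdRed.of_betaStar`). -/
inductive StdRed : Lam → Lam → Prop
  | var {s : Lam} {n : ℕ} : WhrStar s (var n) → StdRed s (var n)
  | app {s p q w₁ w₂ : Lam} :
      WhrStar s (app p q) → StdRed p w₁ → StdRed q w₂ → StdRed s (app w₁ w₂)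
  | lam {s p w : Lam} : WhrStar s (lam p) → StdRed p w → StdRed s (lam w)

theorem StdRed.refl (s : Lam) : StdRed s s := by
  induction s with
  | var n => exact .var .refl
  | app a b iha ihb => exact .app .refl iha ihb
  | lam a ih => exact .lam .refl ih

theorem WhrStar.trans_stdRed {s s' w : Lam} (h : WhrStar s s') (hs : StdRed s' w) :
    StdRed s w := by
  cases hs with
  | var h' => exact .var (h.trans h')
  | app h' hp hq => exact .app (h.trans h') hp hq
  | lam h' hp => exact .lam (h.trans h') hp

theorem StdRed.betaStar {s w : Lam} (h : StdRed s w) : BetaStar s w := by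
  induction h with
  | var h => exact h.betaStar
  | app h _ _ ihp ihq => exact h.betaStar.trans ((ihp.appL _).trans (BetaStar.appR _ ihq))
  | lam h _ ih => exact h.betaStar.trans ih.lam

theorem StdRed.rename {a a' : Lam} (h : StdRed a a') (r : ℕ → ℕ) :
    StdRed (Lam.rename r a) (Lam.rename r a') := by
  induction h generalizing r with
  | var h => exact .var (h.rename r)
  | app h _ _ ihp ihq => exact .app (h.rename r) (ihp r) (ihq r)
  | lam h _ ih => exact .lam (h.rename r) (ih _)

theorem StdRed.msubst {a a' : Lam} (h : StdRed a a') {σ τ : ℕ → Lam}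
    (hστ : ∀ n, StdRed (σ n) (τ n)) : StdRed (Lam.msubst σ a) (Lam.msubst τ a') := by
  induction h generalizing σ τ with
  | var h => exact (h.msubst σ).trans_stdRed (hστ _)
  | app h _ _ ihp ihq => exact .app (h.msubst σ) (ihp hστ) (ihq hστ)
  | lam h _ ih =>
    refine .lam (h.msubst σ) (ih fun n => ?_)
    cases n with
    | zero => exact .refl _
    | succ n => exact (hστ n).rename _

theorem StdRed.tail_beta {s w w' : Lam} (h : StdRed s w) (hb : Beta w w') : StdRed s w' := by
  induction h generalizing w' with
  | var _ => cases hb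
  | @app s p q w₁ w₂ hs hp hq ihp ihq =>
    cases hb with
    | beta r u =>
      cases hp with | lam hp hr =>
      refine WhrStar.trans_stdRed ((hs.trans (hp.appL q)).tail (Whr.head _ q)) ?_
      rw [subst_zero_eq_msubst, subst_zero_eq_msubst]
      refine hr.msubst fun n => ?_
      cases n with
      | zero => exact hq
      | succ n => exact .refl _
    | appL u hb => exact .app hs (ihp hb) hq
    | appR t hb => exact .app hs hp (ihq hb)
  | lam hs _ ih =>
    cases hb with
    | lam hb => exact .lam hs (ih hb)

theorem StdRed.of_betaStar {s w : Lam} (h : BetaStar s w) : StdRed s w := by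
  induction h with
  | refl => exact .refl s
  | tail _ hb ih => exact ih.tail_beta hb

theorem StdRed.app_cases {s u w : Lam} (h : StdRed (Lam.app s u) w) :
    (∃ w₁ w₂, w = Lam.app w₁ w₂ ∧ StdRed s w₁ ∧ StdRed u w₂) ∨
      ∃ b, WhrStar s (Lam.lam b) ∧ StdRed (subst b 0 u) w := by
  cases h with
  | var h =>
    obtain ⟨p, hp, -⟩ | ⟨b, hb, hsub⟩ := h.app_cases
    · cases hp
    · exact Or.inr ⟨b, hb, .var hsub⟩
  | app h hp hq =>
    obtain ⟨p, hp', hs⟩ | ⟨b, hb, hsub⟩ := h.app_cases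
    · cases hp'
      exact Or.inl ⟨_, _, rfl, hs.trans_stdRed hp, hq⟩
    · exact Or.inr ⟨b, hb, .app hsub hp hq⟩
  | lam h hp =>
    obtain ⟨p, hp', -⟩ | ⟨b, hb, hsub⟩ := h.app_cases
    · cases hp'
    · exact Or.inr ⟨b, hb, .lam hsub hp⟩

theorem StdRed.exists_of_rename {r : ℕ → ℕ} {a w : Lam} (h : StdRed (Lam.rename r a) w) :
    ∃ w', StdRed a w' ∧ w = Lam.rename r w' := by
  generalize hs : Lam.rename r a = s at h
  induction h generalizing a r with
  | var h =>
    subst hs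
    obtain ⟨a', ha', h'⟩ := h.exists_of_rename
    obtain ⟨k, rfl, rfl⟩ := rename_eq_var h'.symm
    exact ⟨Lam.var k, ha'.trans_stdRed (.refl _), rfl⟩
  | app h _ _ ihp ihq =>
    subst hs
    obtain ⟨a', ha', h'⟩ := h.exists_of_rename
    obtain ⟨a₁, a₂, rfl, rfl, rfl⟩ := rename_eq_app h'.symm
    obtain ⟨w₁, hw₁, rfl⟩ := ihp rfl
    obtain ⟨w₂, hw₂, rfl⟩ := ihq rfl
    exact ⟨Lam.app w₁ w₂, .app ha' hw₁ hw₂, rfl⟩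
  | lam h _ ih =>
    subst hs
    obtain ⟨a', ha', h'⟩ := h.exists_of_rename
    obtain ⟨a₀, rfl, rfl⟩ := rename_eq_lam h'.symm
    obtain ⟨w, hw, rfl⟩ := ih rfl
    exact ⟨Lam.lam w, .lam ha' hw, rfl⟩

def iterApp (f x : Lam) : ℕ → Lam
  | 0 => x
  | n + 1 => app f (iterApp f x n)

theorem rename_iterApp (r : ℕ → ℕ) (f x : Lam) (n : ℕ) :
    rename r (iterApp f x n) = iterApp (rename r f) (rename r x) n := by
  induction n with
  | zero => rfl
  | succ n ih => simp only [iterApp, rename, ih]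

theorem ClosedAt.iterApp {m : ℕ} {f x : Lam} (hf : ClosedAt m f) (hx : ClosedAt m x) (n : ℕ) :
    ClosedAt m (Lam.iterApp f x n) := by
  induction n with
  | zero => exact hx
  | succ n ih => exact .app hf ih

theorem closedAt_lam_iff {m : ℕ} {t : Lam} : ClosedAt m (lam t) ↔ ClosedAt (m + 1) t :=
  ⟨fun h => by cases h; assumption, .lam⟩

/-- `λf. f`, the η-contracted numeral `1`, is the one β-normal inhabitant of `Ent` besides the
Church numerals. -/
inductive EntForm : Lam → Prop
  | id : EntForm (lam (var 0))
  | church (n : ℕ) : EntForm (lam (lam (iterApp (var 1) (var 0) n)))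

theorem betaStar_of_stdRed_rename {k : ℕ} {r : ℕ → ℕ} (hr : Set.InjOn r (Set.Iio k)) {a e : Lam}
    (ha : ClosedAt k a) (he : ClosedAt k e) (h : StdRed (rename r a) (rename r e)) :
    BetaStar a e := by
  obtain ⟨w, hw, hwe⟩ := h.exists_of_rename
  rw [ClosedAt.rename_injective hr he (ha.betaStar hw.betaStar) hwe]
  exact hw.betaStar

theorem betaStar_id_of_stdRed {m : ℕ} {t : Lam} (ht : ClosedAt m t)
    (h : StdRed (app t (var (m + 1))) (var (m + 1))) : BetaStar t (lam (var 0)) := by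
  obtain ⟨_, _, h, -⟩ | ⟨a, ha, hsub⟩ := h.app_cases
  · cases h
  have hinj : Set.InjOn (scons (m + 1) id) (Set.Iio (m + 1)) :=
    injOn_scons (Set.injOn_id _) fun i hi => by simp only [id]; omega
  rw [subst_var_eq_rename] at hsub
  refine ha.betaStar.trans (BetaStar.lam (betaStar_of_stdRed_rename hinj ?_ (.var (by omega)) hsub))
  exact closedAt_lam_iff.mp (ht.betaStar ha.betaStar)

theorem betaStar_church_of_stdRed {m n : ℕ} {t b : Lam} (ht : ClosedAt m t)
    (hb : WhrStar (app t (var (m + 1))) (lam b))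
    (h : StdRed (subst b 0 (var m)) (iterApp (var (m + 1)) (var m) n)) :
    BetaStar t (lam (lam (iterApp (var 1) (var 0) n))) := by
  obtain ⟨p, hp, -⟩ | ⟨a, ha, hab⟩ := hb.app_cases
  · cases hp
  rw [subst_var_eq_rename] at hab
  obtain ⟨a', ha', hab'⟩ := hab.exists_of_rename
  obtain ⟨a₂, rfl, rfl⟩ := rename_eq_lam hab'.symm
  -- `b[x/0]` is `a₂` renamed by `0 ↦ m`, `1 ↦ m + 1`, `k + 2 ↦ k`: injective on `Iio (m + 2)`
  rw [subst_var_eq_rename, rename_rename, scons_comp_upRen] at h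
  have hinj : Set.InjOn (scons m (scons (m + 1) id)) (Set.Iio (m + 2)) := by
    refine injOn_scons (injOn_scons (Set.injOn_id _) fun i hi => by simp only [id]; omega) ?_
    rintro (_ | i) hi
    · exact Nat.succ_ne_self m
    · simp only [scons_succ, id]; omega
  have ha₂ : ClosedAt (m + 2) a₂ :=
    closedAt_lam_iff.mp <| (closedAt_lam_iff.mp (ht.betaStar ha.betaStar)).betaStar ha'.betaStar
  have hiter : ClosedAt (m + 2) (iterApp (var 1) (var 0) n) :=
    ClosedAt.iterApp (.var (by omega)) (.var (by omega)) n
  refine ha.betaStar.trans (BetaStar.lam (ha'.betaStar.trans (BetaStar.lam ?_)))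
  exact betaStar_of_stdRed_rename hinj ha₂ hiter (by rwa [rename_iterApp])

theorem exists_entForm_of_stdRed {m n : ℕ} {t : Lam} (ht : ClosedAt m t)
    (h : StdRed (app (app t (var (m + 1))) (var m)) (iterApp (var (m + 1)) (var m) n)) :
    ∃ c, EntForm c ∧ BetaStar t c := by
  obtain ⟨w₁, w₂, hw, h₁, -⟩ | ⟨b, hb, hsub⟩ := h.app_cases
  · cases n with
    | zero => cases hw
    | succ n =>
      obtain ⟨rfl, -⟩ := app.inj hw
      exact ⟨_, .id, betaStar_id_of_stdRed ht h₁⟩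
  · exact ⟨_, .church n, betaStar_church_of_stdRed ht hb hsub⟩

end Lam

open Lam

def Interp.insertAt (d : ℕ) (G : Set Lam) (I : Interp) : Interp := fun n =>
  if n < d then I n else if n = d then G else I (n - 1)

theorem Interp.insertAt_zero (G : Set Lam) (I : Interp) : I.insertAt 0 G = Interp.cons G I := by
  funext n
  cases n <;> simp [insertAt, Interp.cons]

theorem Interp.cons_insertAt (H G : Set Lam) (d : ℕ) (I : Interp) :
    Interp.cons H (I.insertAt d G) = (Interp.cons H I).insertAt (d + 1) G := by
  funext n
  cases n with
  | zero => simp [insertAt, Interp.cons]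
  | succ n =>
    simp only [Interp.cons, insertAt, Nat.add_lt_add_iff_right, Nat.add_right_cancel_iff]
    split_ifs with h₁ h₂ <;> try rfl
    obtain ⟨k, rfl⟩ : ∃ k, n = k + 1 := ⟨n - 1, by omega⟩
    rfl

theorem interpC_lift (C : Set Lam → Prop) (A : Ty) (d : ℕ) (G : Set Lam) (I : Interp) :
    interpC C (A.lift d) (I.insertAt d G) = interpC C A I := by
  induction A generalizing d I with
  | var n =>
    simp only [Ty.lift]
    split_ifs with h
    · simp [interpC, Interp.insertAt, h]
    · simp [interpC, Interp.insertAt, show ¬ n + 1 < d by omega, show n + 1 ≠ d by omega]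
  | arr B B' ih₁ ih₂ => simp only [Ty.lift, interpC, ih₁, ih₂]
  | all A ih =>
    simp only [Ty.lift, interpC, Interp.cons_insertAt, ih]

theorem interpC_subst (C : Set Lam → Prop) (A : Ty) (k : ℕ) (B : Ty) (I : Interp) :
    interpC C (A.subst k B) I = interpC C A (I.insertAt k (interpC C B I)) := by
  induction A generalizing k B I with
  | var n =>
    rcases Nat.lt_trichotomy n k with h | rfl | h
    · simp [Ty.subst, interpC, Interp.insertAt, h, h.ne, h.not_gt]
    · simp [Ty.subst, interpC, Interp.insertAt]
    · simp [Ty.subst, interpC, Interp.insertAt, h, h.ne', h.not_gt]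
  | arr B' B'' ih₁ ih₂ => simp only [Ty.subst, interpC, ih₁, ih₂]
  | all A ih =>
    simp only [Ty.subst, interpC, ih]
    refine Set.iInter₂_congr fun H _ => ?_
    rw [← Interp.insertAt_zero, interpC_lift, Interp.insertAt_zero, Interp.cons_insertAt]

theorem Saturated.arrowSet {G G' : Set Lam} (hG' : Saturated G') : Saturated (arrowSet G G') :=
  fun _ _ h hu v hv => hG' _ _ (h.appL v) (hu v hv)

theorem Saturated.interp {I : Interp} (hI : ∀ n, Saturated (I n)) (A : Ty) :
    Saturated (interpC Saturated A I) := by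
  induction A generalizing I with
  | var n => exact hI n
  | arr B B' _ ih => exact (ih hI).arrowSet
  | all A ih =>
    intro t u h hu
    simp only [interpC, Set.mem_iInter] at hu ⊢
    intro G hG
    refine ih (fun n => ?_) t u h (hu G hG)
    cases n with
    | zero => exact hG
    | succ n => exact hI n

theorem Interp.cons_saturated {G : Set Lam} {I : Interp} (hG : Saturated G)
    (hI : ∀ n, Saturated (I n)) (n : ℕ) : Saturated (Interp.cons G I n) := by
  cases n with
  | zero => exact hG
  | succ n => exact hI n

theorem TyJ.msubst_mem_interpC {Γ : Ctx} {a : Lam} {A : Ty} (h : TyJ Γ a A) {I : Interp}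
    (hI : ∀ n, Saturated (I n)) {σ : ℕ → Lam}
    (hσ : ∀ n B, Γ n = some B → σ n ∈ interpC Saturated B I) :
    msubst σ a ∈ interpC Saturated A I := by
  induction h generalizing I σ with
  | var hx => exact hσ _ _ hx
  | @lam Γ B C t _ ih =>
    intro u hu
    have hred : Whr (Lam.app (Lam.lam (msubst (upSubst σ) t)) u) (msubst (scons u σ) t) := by
      rw [← msubst_upSubst_scons]; exact Whr.head _ _
    refine Saturated.interp hI C _ _ (.single hred) (ih hI fun n B' hn => ?_)
    cases n with
    | zero => cases hn; exact hu
    | succ n => exact hσ n B' hn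
  | app _ _ ih₁ ih₂ => exact ih₁ hI hσ _ (ih₂ hI hσ)
  | @allI Γ A t _ ih =>
    simp only [interpC, Set.mem_iInter]
    refine fun G hG => ih (Interp.cons_saturated hG hI) fun n B hn => ?_
    obtain ⟨B₀, hB₀, rfl⟩ := Option.map_eq_some_iff.mp hn
    rw [← Interp.insertAt_zero, interpC_lift]
    exact hσ n B₀ hB₀
  | @allE Γ A t C _ ih =>
    have h := ih hI hσ
    simp only [interpC, Set.mem_iInter] at h
    rw [interpC_subst, Interp.insertAt_zero]
    exact h _ (Saturated.interp hI C)

theorem TyJ.mem_sem {t : Lam} {A : Ty} (h : TyJ Ctx.empty t A) : t ∈ Sem A := fun _ hI => by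
  simpa only [msubst_var] using h.msubst_mem_interpC hI (σ := Lam.var) (by simp [Ctx.empty])

theorem mem_interpC_ent {C : Set Lam → Prop} {I : Interp} {t : Lam} :
    t ∈ interpC C Ent I ↔ ∀ G, C G → t ∈ arrowSet (arrowSet G G) (arrowSet G G) := by
  simp [Ent, interpC, Interp.cons]

theorem exists_betaStar_iterApp_of_mem_sem_ent {t : Lam} (h : t ∈ Sem Ent) (f x : Lam) :
    ∃ n, BetaStar (app (app t f) x) (iterApp f x n) := by
  let G : Set Lam := {u | ∃ n, BetaStar u (iterApp f x n)}
  have hG : Saturated G := fun _ _ h ⟨n, hn⟩ => ⟨n, h.betaStar.trans hn⟩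
  have hf : f ∈ arrowSet G G := fun _ ⟨n, hn⟩ => ⟨n + 1, BetaStar.appR f hn⟩
  exact mem_interpC_ent.mp (h (fun _ => G) fun _ => hG) G hG f hf x ⟨0, .refl⟩

theorem msubst_mem_of_stdRed_iterApp {G : Set Lam} (hG : Saturated G) {σ : ℕ → Lam} {i j : ℕ}
    (hi : σ i ∈ arrowSet G G) (hj : σ j ∈ G) (n : ℕ) {s : Lam}
    (h : StdRed s (iterApp (var i) (var j) n)) : msubst σ s ∈ G := by
  induction n generalizing s with
  | zero => cases h with | var h => exact hG _ _ (h.msubst σ) hj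
  | succ n ih =>
    cases h with | app h hp hq => cases hp with | var hp =>
    exact hG _ _ ((h.msubst σ).trans ((hp.msubst σ).appL _)) (hi _ (ih hq))

theorem Lam.EntForm.mem_sem_ent {c t : Lam} (hc : EntForm c) (h : BetaStar t c) : t ∈ Sem Ent := by
  intro I _
  rw [mem_interpC_ent]
  intro G hG f hf x hx
  cases hc with
  | id =>
    cases StdRed.of_betaStar h with | lam ht hs => cases hs with | var hs =>
    exact hG.arrowSet _ _ (ht.app_lam f) (hG.arrowSet _ _ (hs.msubst _) hf) x hx
  | church n =>
    cases StdRed.of_betaStar h with | lam ht hs => cases hs with | lam hs₀ hs₁ =>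
    have hred := WhrStar.app_lam ((ht.app_lam f).trans (hs₀.msubst _)) x
    rw [← subst_zero_eq_msubst, msubst_upSubst_scons] at hred
    exact hG _ _ hred (msubst_mem_of_stdRed_iterApp hG (i := 1) (j := 0) hf hx n hs₁)

theorem TyJ.iterApp {Γ : Ctx} {f x : Lam} {A : Ty} (hf : TyJ Γ f (.arr A A)) (hx : TyJ Γ x A)
    (n : ℕ) : TyJ Γ (iterApp f x n) A := by
  induction n with
  | zero => exact hx
  | succ n ih => exact .app hf ih

theorem Lam.EntForm.tyJ {c : Lam} (hc : EntForm c) : TyJ Ctx.empty c Ent := by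
  have hΓ : Ctx.liftTy Ctx.empty = Ctx.empty := rfl
  refine .allI (hΓ ▸ ?_)
  cases hc with
  | id => exact .lam (.var rfl)
  | church n => exact .lam (.lam (.iterApp (.var rfl) (.var rfl) n))

theorem exists_entForm_of_betaStar_mem_sem_ent {t t' : Lam} (ht : BetaStar t t')
    (h : t' ∈ Sem Ent) : ∃ c, EntForm c ∧ BetaStar t c := by
  obtain ⟨m, hm⟩ := exists_closedAt t
  obtain ⟨n, hn⟩ := exists_betaStar_iterApp_of_mem_sem_ent h (var (m + 1)) (var m)
  exact exists_entForm_of_stdRed hm (.of_betaStar (((ht.appL _).appL _).trans hn))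

/-- `t ∈ |Ent|` iff `t` β-reduces to a term of type `Ent`;
in particular `|Ent| = {t : ∃ t', t →_β t' ∧ ⊢_F t' : Ent}`. -/
theorem ent_characterization :
    (∀ t : Lam, t ∈ Sem Ent ↔ ∃ t', Lam.BetaStar t t' ∧ TyJ Ctx.empty t' Ent) ∧
    Sem Ent = {t : Lam | ∃ t', Lam.BetaStar t t' ∧ TyJ Ctx.empty t' Ent} := by
  have key (t : Lam) : t ∈ Sem Ent ↔ ∃ t', BetaStar t t' ∧ TyJ Ctx.empty t' Ent := by
    constructor
    · intro h
      obtain ⟨c, hc, htc⟩ := exists_entForm_of_betaStar_mem_sem_ent .refl h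
      exact ⟨c, htc, hc.tyJ⟩
    · rintro ⟨t', htt', ht'⟩
      obtain ⟨c, hc, htc⟩ := exists_entForm_of_betaStar_mem_sem_ent htt' ht'.mem_sem
      exact hc.mem_sem_ent htc
  exact ⟨key, Set.ext key⟩
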